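/- arXiv:2507.09902 — 2 statements merged into one kernel-verified Lean document; each statement's English description precedes it below -/
import Mathlib

section
/- For fictitious play in the rock-paper-scissors game with lexicographic tie-breaking, for all k ≥ 1, at time t = 9k², the accumulated play vector equals x_t = (3k²−2k, 3k², 3k²+2k) and U_t = A_rps x_t = (2k, −4k, 2k). -/
open Matrix

/-- The rock-paper-scissors payoff matrix. -/
def Arps : Matrix (Fin 3) (Fin 3) ℚ := !![0,-1,1; 1,0,-1; -1,1,0]

/-- Lexicographic argmax of a 3-vector: the smallest index attaining the maximum. -/
def lexArgmax (v : Fin 3 → ℚ) : Fin 3 :=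
  if v 1 ≤ v 0 ∧ v 2 ≤ v 0 then 0 else if v 2 ≤ v 1 then 1 else 2

/-- Fictitious play iterates for RPS with lexicographic tie-breaking, x_0 = 0. -/
def rpsX : ℕ → (Fin 3 → ℚ)
  | 0 => 0
  | t+1 => rpsX t + Pi.single (lexArgmax (Arps.mulVec (rpsX t))) 1

lemma mulVec_arps (a b c : ℚ) : Arps.mulVec ![a,b,c] = ![c-b, a-c, b-a] := by
  funext i
  fin_cases i <;>
    simp [Arps, Matrix.mulVec, dotProduct, Fin.sum_univ_three] <;> ring

lemma lex0 (v : Fin 3 → ℚ) (h1 : v 1 ≤ v 0) (h2 : v 2 ≤ v 0) : lexArgmax v = 0 := by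
  simp [lexArgmax, h1, h2]

lemma lex1 (v : Fin 3 → ℚ) (h1 : v 0 < v 1) (h2 : v 2 ≤ v 1) : lexArgmax v = 1 := by
  simp [lexArgmax, h1.not_ge, h2]

lemma lex2 (v : Fin 3 → ℚ) (h1 : v 1 < v 2) (h2 : v 0 < v 2) : lexArgmax v = 2 := by
  simp [lexArgmax, h1.not_ge, h2.not_ge]

lemma add_single0 (a b c : ℚ) : ![a,b,c] + Pi.single (0 : Fin 3) 1 = ![a+1,b,c] := by
  funext i; fin_cases i <;> simp

lemma add_single1 (a b c : ℚ) : ![a,b,c] + Pi.single (1 : Fin 3) 1 = ![a,b+1,c] := by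
  funext i; fin_cases i <;> simp [Pi.single_apply]

lemma add_single2 (a b c : ℚ) : ![a,b,c] + Pi.single (2 : Fin 3) 1 = ![a,b,c+1] := by
  funext i; fin_cases i <;> simp [Pi.single_apply]

lemma rock_phase (k t : ℕ)
    (hx : rpsX t = ![3*(k:ℚ)^2 - 2*k, 3*(k:ℚ)^2, 3*(k:ℚ)^2 + 2*k]) :
    ∀ j ≤ 6*k+1, rpsX (t+j) = ![3*(k:ℚ)^2 - 2*k + j, 3*(k:ℚ)^2, 3*(k:ℚ)^2 + 2*k] := by
  intro j hj
  induction j with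
  | zero => simpa using hx
  | succ j ih =>
    have hj' : j ≤ 6*k := by omega
    have ihx := ih (by omega)
    have hjq : (j:ℚ) ≤ 6*k := by exact_mod_cast hj'
    have harg : lexArgmax (Arps.mulVec (rpsX (t+j))) = 0 := by
      rw [ihx, mulVec_arps]
      apply lex0 <;> simp <;> linarith
    have : rpsX (t + (j+1)) = rpsX (t+j) + Pi.single (lexArgmax (Arps.mulVec (rpsX (t+j)))) 1 := by
      rw [show t + (j+1) = (t+j) + 1 from rfl]; rfl
    rw [this, harg, ihx, add_single0]
    push_cast
    ring_nf

lemma paper_phase (k t : ℕ)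
    (hx : rpsX t = ![3*(k:ℚ)^2 + 4*k + 1, 3*(k:ℚ)^2, 3*(k:ℚ)^2 + 2*k]) :
    ∀ p ≤ 6*k+3, rpsX (t+p) = ![3*(k:ℚ)^2 + 4*k + 1, 3*(k:ℚ)^2 + p, 3*(k:ℚ)^2 + 2*k] := by
  intro p hp
  induction p with
  | zero => simpa using hx
  | succ p ih =>
    have hp' : p ≤ 6*k+2 := by omega
    have ihx := ih (by omega)
    have hpq : (p:ℚ) ≤ 6*k+2 := by exact_mod_cast hp'
    have harg : lexArgmax (Arps.mulVec (rpsX (t+p))) = 1 := by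
      rw [ihx, mulVec_arps]
      apply lex1 <;> simp <;> linarith
    have : rpsX (t + (p+1)) = rpsX (t+p) + Pi.single (lexArgmax (Arps.mulVec (rpsX (t+p)))) 1 := by
      rw [show t + (p+1) = (t+p) + 1 from rfl]; rfl
    rw [this, harg, ihx, add_single1]
    push_cast
    ring_nf

lemma sciss_phase (k t : ℕ)
    (hx : rpsX t = ![3*(k:ℚ)^2 + 4*k + 1, 3*(k:ℚ)^2 + 6*k + 3, 3*(k:ℚ)^2 + 2*k]) :
    ∀ s ≤ 6*k+5, rpsX (t+s) = ![3*(k:ℚ)^2 + 4*k + 1, 3*(k:ℚ)^2 + 6*k + 3, 3*(k:ℚ)^2 + 2*k + s] := by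
  intro s hs
  induction s with
  | zero => simpa using hx
  | succ s ih =>
    have hs' : s ≤ 6*k+4 := by omega
    have ihx := ih (by omega)
    have hsq : (s:ℚ) ≤ 6*k+4 := by exact_mod_cast hs'
    have harg : lexArgmax (Arps.mulVec (rpsX (t+s))) = 2 := by
      rw [ihx, mulVec_arps]
      apply lex2 <;> simp <;> linarith
    have : rpsX (t + (s+1)) = rpsX (t+s) + Pi.single (lexArgmax (Arps.mulVec (rpsX (t+s)))) 1 := by
      rw [show t + (s+1) = (t+s) + 1 from rfl]; rfl
    rw [this, harg, ihx, add_single2]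
    push_cast
    ring_nf

lemma rps_main (k : ℕ) :
    rpsX (9*k^2) = ![3*(k:ℚ)^2 - 2*k, 3*(k:ℚ)^2, 3*(k:ℚ)^2 + 2*k] := by
  induction k with
  | zero =>
    funext i; fin_cases i <;> simp [rpsX]
  | succ k ih =>
    have h1 := rock_phase k (9*k^2) ih (6*k+1) le_rfl
    rw [show (3*(k:ℚ)^2 - 2*k + (6*k+1 : ℕ)) = 3*(k:ℚ)^2 + 4*k + 1 by push_cast; ring] at h1
    have h2 := paper_phase k (9*k^2 + (6*k+1)) h1 (6*k+3) le_rfl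
    rw [show (3*(k:ℚ)^2 + (6*k+3 : ℕ)) = 3*(k:ℚ)^2 + 6*k + 3 by push_cast; ring] at h2
    have h3 := sciss_phase k (9*k^2 + (6*k+1) + (6*k+3)) h2 (6*k+5) le_rfl
    rw [show 9*k^2 + (6*k+1) + (6*k+3) + (6*k+5) = 9*(k+1)^2 by ring] at h3
    rw [h3]
    funext i; fin_cases i <;> push_cast <;> ring

/-- for all k ≥ 1, at time t = 9k², x_t = (3k²−2k, 3k², 3k²+2k) and
U_t = A_rps x_t = (2k, −4k, 2k). -/
theorem rps_vertex_one (k : ℕ) (hk : 1 ≤ k) :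
    rpsX (9*k^2) = ![3*(k:ℚ)^2 - 2*k, 3*(k:ℚ)^2, 3*(k:ℚ)^2 + 2*k] ∧
    Arps.mulVec (rpsX (9*k^2)) = ![2*(k:ℚ), -4*(k:ℚ), 2*(k:ℚ)] := by
  have h := rps_main k
  refine ⟨h, ?_⟩
  rw [h, mulVec_arps]
  funext i; fin_cases i <;> simp <;> ring
end

section
/- In fictitious play on rock-paper-scissors with lexicographic tie-breaking, the sequence of actions consists of consecutive blocks: action 1 repeated 6k+1 times, then action 2 repeated 6k+3 times, then action 3 repeated 6k+5 times, for k = 0, 1, 2, …. -/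
open Matrix

lemma mulVec_Arps (x : Fin 3 → ℚ) :
    Arps.mulVec x = ![x 2 - x 1, x 0 - x 2, x 1 - x 0] := by
  funext i
  fin_cases i <;>
    simp [Arps, Matrix.mulVec, dotProduct, Fin.sum_univ_three] <;> ring

lemma arg0 {v : Fin 3 → ℚ} (h1 : v 1 ≤ v 0) (h2 : v 2 ≤ v 0) : lexArgmax v = 0 := by
  unfold lexArgmax; rw [if_pos ⟨h1, h2⟩]

lemma arg1 {v : Fin 3 → ℚ} (h1 : ¬ (v 1 ≤ v 0 ∧ v 2 ≤ v 0)) (h2 : v 2 ≤ v 1) :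
    lexArgmax v = 1 := by
  unfold lexArgmax; rw [if_neg h1, if_pos h2]

lemma arg2 {v : Fin 3 → ℚ} (h1 : ¬ (v 1 ≤ v 0 ∧ v 2 ≤ v 0)) (h2 : ¬ v 2 ≤ v 1) :
    lexArgmax v = 2 := by
  unfold lexArgmax; rw [if_neg h1, if_neg h2]

lemma single0 : (Pi.single (0 : Fin 3) (1:ℚ)) = ![1,0,0] := by
  funext i; fin_cases i <;> simp
lemma single1 : (Pi.single (1 : Fin 3) (1:ℚ)) = ![0,1,0] := by
  funext i; fin_cases i <;> simp [Pi.single, Function.update]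
lemma single2 : (Pi.single (2 : Fin 3) (1:ℚ)) = ![0,0,1] := by
  funext i; fin_cases i <;> simp [Pi.single, Function.update]

lemma argState0 (k u : ℕ) (hu : u ≤ 6*k) :
    lexArgmax (Arps.mulVec ![(3*k^2 - 2*k + u : ℚ), 3*k^2, 3*k^2 + 2*k]) = 0 := by
  have hu' : (u:ℚ) ≤ 6*k := by exact_mod_cast hu
  have h0 : (0:ℚ) ≤ u := by positivity
  rw [mulVec_Arps]
  apply arg0 <;> simp <;> linarith

lemma argState1 (k u : ℕ) (hu : u ≤ 6*k+2) :
    lexArgmax (Arps.mulVec ![(3*k^2 + 4*k + 1 : ℚ), 3*k^2 + u, 3*k^2 + 2*k]) = 1 := by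
  have hu' : (u:ℚ) ≤ 6*k+2 := by exact_mod_cast hu
  have h0 : (0:ℚ) ≤ u := by positivity
  have h0k : (0:ℚ) ≤ k := by positivity
  rw [mulVec_Arps]
  apply arg1
  · simp only [not_and, not_le]
    intro h; simp at h ⊢; linarith
  · simp; linarith

lemma argState2 (k u : ℕ) (hu : u ≤ 6*k+4) :
    lexArgmax (Arps.mulVec ![(3*k^2 + 4*k + 1 : ℚ), 3*k^2 + 6*k + 3, 3*k^2 + 2*k + u]) = 2 := by
  have hu' : (u:ℚ) ≤ 6*k+4 := by exact_mod_cast hu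
  have h0 : (0:ℚ) ≤ u := by positivity
  have h0k : (0:ℚ) ≤ k := by positivity
  rw [mulVec_Arps]
  apply arg2
  · simp only [not_and, not_le]
    intro h; simp at h ⊢; linarith
  · simp; linarith

lemma block0 (k : ℕ) (h : rpsX (9*k^2) = ![(3*k^2:ℚ) - 2*k, 3*k^2, 3*k^2 + 2*k]) :
    ∀ u, u ≤ 6*k+1 →
      rpsX (9*k^2 + u) = ![(3*k^2:ℚ) - 2*k + u, 3*k^2, 3*k^2 + 2*k] := by
  intro u
  induction u with
  | zero => intro _; simpa using h
  | succ n ih =>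
    intro hu
    have hn : n ≤ 6*k := by omega
    have hst := ih (by omega)
    have : rpsX (9*k^2 + (n+1)) = rpsX (9*k^2 + n)
        + Pi.single (lexArgmax (Arps.mulVec (rpsX (9*k^2 + n)))) 1 := rfl
    rw [this, hst, argState0 k n hn, single0]
    funext i; fin_cases i <;> simp <;> push_cast <;> ring

lemma block1 (k : ℕ)
    (h : rpsX (9*k^2 + (6*k+1)) = ![(3*k^2:ℚ) + 4*k + 1, 3*k^2, 3*k^2 + 2*k]) :
    ∀ u, u ≤ 6*k+3 →
      rpsX (9*k^2 + (6*k+1) + u) = ![(3*k^2:ℚ) + 4*k + 1, 3*k^2 + u, 3*k^2 + 2*k] := by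
  intro u
  induction u with
  | zero => intro _; simpa using h
  | succ n ih =>
    intro hu
    have hn : n ≤ 6*k+2 := by omega
    have hst := ih (by omega)
    have : rpsX (9*k^2 + (6*k+1) + (n+1)) = rpsX (9*k^2 + (6*k+1) + n)
        + Pi.single (lexArgmax (Arps.mulVec (rpsX (9*k^2 + (6*k+1) + n)))) 1 := rfl
    rw [this, hst, argState1 k n hn, single1]
    funext i; fin_cases i <;> simp <;> push_cast <;> ring

lemma block2 (k : ℕ)
    (h : rpsX (9*k^2 + (12*k+4)) = ![(3*k^2:ℚ) + 4*k + 1, 3*k^2 + 6*k + 3, 3*k^2 + 2*k]) :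
    ∀ u, u ≤ 6*k+5 →
      rpsX (9*k^2 + (12*k+4) + u)
        = ![(3*k^2:ℚ) + 4*k + 1, 3*k^2 + 6*k + 3, 3*k^2 + 2*k + u] := by
  intro u
  induction u with
  | zero => intro _; simpa using h
  | succ n ih =>
    intro hu
    have hn : n ≤ 6*k+4 := by omega
    have hst := ih (by omega)
    have : rpsX (9*k^2 + (12*k+4) + (n+1)) = rpsX (9*k^2 + (12*k+4) + n)
        + Pi.single (lexArgmax (Arps.mulVec (rpsX (9*k^2 + (12*k+4) + n)))) 1 := rfl
    rw [this, hst, argState2 k n hn, single2]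
    funext i; fin_cases i <;> simp <;> push_cast <;> ring

lemma baseState (k : ℕ) :
    rpsX (9*k^2) = ![(3*k^2:ℚ) - 2*k, 3*k^2, 3*k^2 + 2*k] := by
  induction k with
  | zero =>
    show rpsX 0 = _
    funext i; fin_cases i <;> simp [rpsX]
  | succ k ih =>
    have h0 := block0 k ih (6*k+1) le_rfl
    have h0' : rpsX (9*k^2 + (6*k+1)) = ![(3*k^2:ℚ) + 4*k + 1, 3*k^2, 3*k^2 + 2*k] := by
      rw [h0]; funext i; fin_cases i <;> simp <;> push_cast <;> ring
    have h1 := block1 k h0' (6*k+3) le_rfl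
    have h1' : rpsX (9*k^2 + (12*k+4))
        = ![(3*k^2:ℚ) + 4*k + 1, 3*k^2 + 6*k + 3, 3*k^2 + 2*k] := by
      rw [show 9*k^2 + (12*k+4) = 9*k^2 + (6*k+1) + (6*k+3) by ring, h1]
      funext i; fin_cases i <;> simp <;> push_cast <;> ring
    have h2 := block2 k h1' (6*k+5) le_rfl
    rw [show 9*(k+1)^2 = 9*k^2 + (12*k+4) + (6*k+5) by ring, h2]
    funext i; fin_cases i <;> simp <;> push_cast <;> ring

/-- the action sequence of FP on RPS with lexicographic tie-breaking
consists of consecutive blocks: action 1 (index 0) for the 6k+1 steps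
t ∈ [9k²+1, 9k²+6k+1], action 2 (index 1) for the 6k+3 steps t ∈ [9k²+6k+2, 9k²+12k+4],
action 3 (index 2) for the 6k+5 steps t ∈ [9k²+12k+5, 9(k+1)²], for k = 0, 1, 2, ….
(The action at step t is the lexicographic argmax of A_rps x_{t-1}.) -/
theorem rps_action_blocks (k t : ℕ) :
    (9*k^2 + 1 ≤ t → t ≤ 9*k^2 + 6*k + 1 →
      lexArgmax (Arps.mulVec (rpsX (t-1))) = 0) ∧
    (9*k^2 + 6*k + 2 ≤ t → t ≤ 9*k^2 + 12*k + 4 →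
      lexArgmax (Arps.mulVec (rpsX (t-1))) = 1) ∧
    (9*k^2 + 12*k + 5 ≤ t → t ≤ 9*(k+1)^2 →
      lexArgmax (Arps.mulVec (rpsX (t-1))) = 2) := by
  refine ⟨?_, ?_, ?_⟩
  · intro h1 h2
    set u := t - 1 - 9*k^2 with hu
    have ht : t - 1 = 9*k^2 + u := by omega
    have hun : u ≤ 6*k := by omega
    rw [ht, block0 k (baseState k) u (by omega), argState0 k u hun]
  · intro h1 h2
    set u := t - 1 - (9*k^2 + (6*k+1)) with hu
    have ht : t - 1 = 9*k^2 + (6*k+1) + u := by omega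
    have hun : u ≤ 6*k+2 := by omega
    have h0 := block0 k (baseState k) (6*k+1) le_rfl
    have h0' : rpsX (9*k^2 + (6*k+1)) = ![(3*k^2:ℚ) + 4*k + 1, 3*k^2, 3*k^2 + 2*k] := by
      rw [h0]; funext i; fin_cases i <;> simp <;> push_cast <;> ring
    rw [ht, block1 k h0' u (by omega), argState1 k u hun]
  · intro h1 h2
    set u := t - 1 - (9*k^2 + (12*k+4)) with hu
    have ht : t - 1 = 9*k^2 + (12*k+4) + u := by omega
    have hun : u ≤ 6*k+4 := by
      have : t ≤ 9*k^2 + 18*k + 9 := by nlinarith [h2]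
      omega
    have h0 := block0 k (baseState k) (6*k+1) le_rfl
    have h0' : rpsX (9*k^2 + (6*k+1)) = ![(3*k^2:ℚ) + 4*k + 1, 3*k^2, 3*k^2 + 2*k] := by
      rw [h0]; funext i; fin_cases i <;> simp <;> push_cast <;> ring
    have h1' : rpsX (9*k^2 + (12*k+4))
        = ![(3*k^2:ℚ) + 4*k + 1, 3*k^2 + 6*k + 3, 3*k^2 + 2*k] := by
      rw [show 9*k^2 + (12*k+4) = 9*k^2 + (6*k+1) + (6*k+3) by ring,
        block1 k h0' (6*k+3) le_rfl]
      funext i; fin_cases i <;> simp <;> push_cast <;> ring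
    rw [ht, block2 k h1' u (by omega), argState2 k u hun]
end
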